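/- arXiv:0810.4191 — 12 statements merged into one kernel-verified Lean document; each statement's English description precedes it below -/
import Mathlib

section
/- Let A be a type with two binary operations | and ∗. If axiom C6 ((x|y) ∗ y = x for all x, y) and axiom C4 ((a|b)∗(c|d) = (a∗c)|(b∗d) for all a,b,c,d) hold, then axiom C7 holds: (x∗y) | y = x for all x, y. (Lemma 2.1.3(c).) -/
/-- Lemma 2.1.3(c): axioms C6 and C4 imply axiom C7. -/
theorem conway_C6_C4_imp_C7 {A : Type*} (bar ast : A → A → A)
    (hC6 : ∀ x y : A, ast (bar x y) y = x)
    (hC4 : ∀ a b c d : A, ast (bar a b) (bar c d) = bar (ast a c) (ast b d)) :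
    ∀ x y : A, bar (ast x y) y = x := by
  intro x y
  calc bar (ast x y) y = bar (ast x y) (ast (bar y y) y) := by rw [hC6 y y]
    _ = ast (bar x (bar y y)) (bar y y) := (hC4 x (bar y y) y y).symm
    _ = x := hC6 x (bar y y)
end

section
/- Let A be a type with two binary operations | and ∗. If axiom C7 ((x∗y) | y = x for all x, y) and axiom C4 ((a|b)∗(c|d) = (a∗c)|(b∗d) for all a,b,c,d) hold, then axiom C6 holds: (x|y) ∗ y = x for all x, y. (Lemma 2.1.3(d).) -/
/-- Lemma 2.1.3(d): axioms C7 and C4 imply axiom C6. -/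
theorem conway_C7_C4_imp_C6 {A : Type*} (bar ast : A → A → A)
    (hC7 : ∀ x y : A, bar (ast x y) y = x)
    (hC4 : ∀ a b c d : A, ast (bar a b) (bar c d) = bar (ast a c) (ast b d)) :
    ∀ x y : A, ast (bar x y) y = x := by
  intro x y
  calc ast (bar x y) y = ast (bar x y) (bar (ast y y) y) := by rw [hC7]
    _ = bar (ast x (ast y y)) (ast y y) := hC4 x y (ast y y) y
    _ = x := hC7 x (ast y y)
end

section
/- Let A be a type with two binary operations | and ∗. If axiom C6 ((x|y) ∗ y = x for all x, y) and axiom C4 ((a|b)∗(c|d) = (a∗c)|(b∗d) for all a,b,c,d) hold, then axiom C5 holds: (a∗b)∗(c∗d) = (a∗c)∗(b∗d) for all a,b,c,d. (Lemma 2.1.3(e).) -/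
/-! First C6 and C4 give C7, `(x ∗ y) | y = x`, because `y = (y | y) ∗ y`. With C7 one writes
`a ∗ b = ((a ∗ c) | c) ∗ ((b ∗ d) | d)`, which C4 turns into `((a ∗ c) ∗ (b ∗ d)) | (c ∗ d)`;
starring with `c ∗ d` and cancelling by C6 gives C5. -/

section ConwayAxioms

variable {A : Type*} {bar ast : A → A → A}

theorem bar_ast_cancel_of_C6_C4 (hC6 : ∀ x y : A, ast (bar x y) y = x)
    (hC4 : ∀ a b c d : A, ast (bar a b) (bar c d) = bar (ast a c) (ast b d)) (x y : A) :
    bar (ast x y) y = x :=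
  calc bar (ast x y) y = bar (ast x y) (ast (bar y y) y) := by rw [hC6]
    _ = ast (bar x (bar y y)) (bar y y) := (hC4 x (bar y y) y y).symm
    _ = x := hC6 x (bar y y)

theorem ast_medial_of_C6_C4_C7 (hC6 : ∀ x y : A, ast (bar x y) y = x)
    (hC4 : ∀ a b c d : A, ast (bar a b) (bar c d) = bar (ast a c) (ast b d))
    (hC7 : ∀ x y : A, bar (ast x y) y = x) (a b c d : A) :
    ast (ast a b) (ast c d) = ast (ast a c) (ast b d) :=
  calc ast (ast a b) (ast c d)
      = ast (ast (bar (ast a c) c) (bar (ast b d) d)) (ast c d) := by rw [hC7, hC7]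
    _ = ast (bar (ast (ast a c) (ast b d)) (ast c d)) (ast c d) := by rw [hC4]
    _ = ast (ast a c) (ast b d) := hC6 _ _

end ConwayAxioms

/-- Lemma 2.1.3(e): axioms C6 and C4 imply axiom C5. -/
theorem conway_C6_C4_imp_C5 {A : Type*} (bar ast : A → A → A)
    (hC6 : ∀ x y : A, ast (bar x y) y = x)
    (hC4 : ∀ a b c d : A, ast (bar a b) (bar c d) = bar (ast a c) (ast b d)) :
    ∀ a b c d : A, ast (ast a b) (ast c d) = ast (ast a c) (ast b d) :=
  ast_medial_of_C6_C4_C7 hC6 hC4 (bar_ast_cancel_of_C6_C4 hC6 hC4)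
end

section
/- Let A be a type with two binary operations | and ∗. If axiom C7 ((x∗y) | y = x for all x, y) and axiom C4 ((a|b)∗(c|d) = (a∗c)|(b∗d) for all a,b,c,d) hold, then axiom C3 holds: (a|b)|(c|d) = (a|c)|(b|d) for all a,b,c,d. (Lemma 2.1.3(f).) -/
/-!
By C7 each right translation `x ↦ x ∗ y` has the left inverse `x ↦ x | y`, hence is injective, so
C3 may be checked after multiplying both sides by `c | d` on the right. C4 and C7 together give
C6, `(a | b) ∗ b = a`, and with C4 once more both products reduce to `a | b`.
-/

section ConwayAxioms

variable {A : Type*} {bar ast : A → A → A}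

theorem injective_ast_right_of_bar_ast (hC7 : ∀ x y : A, bar (ast x y) y = x) (y : A) :
    Function.Injective (ast · y) :=
  Function.LeftInverse.injective (g := (bar · y)) fun x => hC7 x y

theorem ast_bar_self_right (hC7 : ∀ x y : A, bar (ast x y) y = x)
    (hC4 : ∀ a b c d : A, ast (bar a b) (bar c d) = bar (ast a c) (ast b d)) (a b : A) :
    ast (bar a b) b = a :=
  calc ast (bar a b) b = ast (bar a b) (bar (ast b b) b) := by rw [hC7]
    _ = bar (ast a (ast b b)) (ast b b) := hC4 a b (ast b b) b
    _ = a := hC7 a (ast b b)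

end ConwayAxioms

/-- Lemma 2.1.3(f): axioms C7 and C4 imply axiom C3. -/
theorem conway_C7_C4_imp_C3 {A : Type*} (bar ast : A → A → A)
    (hC7 : ∀ x y : A, bar (ast x y) y = x)
    (hC4 : ∀ a b c d : A, ast (bar a b) (bar c d) = bar (ast a c) (ast b d)) :
    ∀ a b c d : A, bar (bar a b) (bar c d) = bar (bar a c) (bar b d) := by
  intro a b c d
  have hC6 := ast_bar_self_right hC7 hC4
  apply injective_ast_right_of_bar_ast hC7 (bar c d)
  change ast (bar (bar a b) (bar c d)) (bar c d) = ast (bar (bar a c) (bar b d)) (bar c d)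
  rw [hC6, hC4, hC6, hC6]
end

section
/- Let A be a type with two binary operations | and ∗. If axiom C3 ((a|b)|(c|d) = (a|c)|(b|d) for all a,b,c,d), axiom C6 ((x|y) ∗ y = x for all x, y), and axiom C7 ((x∗y) | y = x for all x, y) hold, then axiom C4 holds: (a|b)∗(c|d) = (a∗c)|(b∗d) for all a,b,c,d. (Lemma 2.1.3(h).) -/
section ConwayAlgebra

variable {A : Type*} (bar ast : A → A → A)

theorem ast_eq_of_bar_eq (hC6 : ∀ x y : A, ast (bar x y) y = x) {x y z : A}
    (h : bar x y = z) : ast z y = x :=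
  h ▸ hC6 x y

theorem bar_bar_ast_ast (hC3 : ∀ a b c d : A, bar (bar a b) (bar c d) = bar (bar a c) (bar b d))
    (hC7 : ∀ x y : A, bar (ast x y) y = x) (a b c d : A) :
    bar (bar (ast a c) (ast b d)) (bar c d) = bar a b := by
  rw [hC3, hC7, hC7]

end ConwayAlgebra

/-- Lemma 2.1.3(h): axioms C3, C6 and C7 imply axiom C4. -/
theorem conway_C3_C6_C7_imp_C4 {A : Type*} (bar ast : A → A → A)
    (hC3 : ∀ a b c d : A, bar (bar a b) (bar c d) = bar (bar a c) (bar b d))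
    (hC6 : ∀ x y : A, ast (bar x y) y = x)
    (hC7 : ∀ x y : A, bar (ast x y) y = x) :
    ∀ a b c d : A, ast (bar a b) (bar c d) = bar (ast a c) (ast b d) :=
  fun a b c d => ast_eq_of_bar_eq bar ast hC6 (bar_bar_ast_ast bar ast hC3 hC7 a b c d)
end

section
/- Let K be a field and x, y ∈ K with x ≠ 0 and y ≠ 0. Define binary operations on K by u | w = x⁻¹·(w − y·u) and u ∗ w = y⁻¹·(w − x·u), and set aₙ = (x + y)^(n−1) for n ≥ 1 (so a₁ = 1). Then (K; a₁, a₂, …, |, ∗) satisfies all seven Conway algebra axioms C1–C7. (Verification that the Jones–Conway (HOMFLY) algebra of Example 2.1.8 is a Conway algebra.) -/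
/-!
Both operations are linear in their two arguments, and any two linear binary operations
`u ↦ α u + β w`, `u ↦ γ u + δ w` satisfy the interchange law, which gives C3–C5 at once.
The remaining axioms come from the skein relation `x·w₁ + y·w₂ = w₀`: `w₁ = w₂ | w₀` and
`w₂ = w₁ ∗ w₀` are both equivalent to it, so `|` and `∗` undo each other (C6, C7), and
`aₙ₊₁ = (x + y)·aₙ` says that `(aₙ, aₙ, aₙ₊₁)` solves it (C1, C2).
-/

theorem linear_ops_interchange {R : Type*} [CommSemiring R] {f g : R → R → R} {α β γ δ : R}
    (hf : ∀ u w, f u w = α * u + β * w) (hg : ∀ u w, g u w = γ * u + δ * w) (p q r s : R) :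
    g (f p q) (f r s) = f (g p r) (g q s) := by
  simp only [hf, hg]
  ring

theorem inv_mul_sub_mul_eq_iff {K : Type*} [Field K] {x : K} (hx : x ≠ 0) (y u v w : K) :
    x⁻¹ * (w - y * u) = v ↔ x * v + y * u = w := by
  rw [inv_mul_eq_iff_eq_mul₀ hx, sub_eq_iff_eq_add, eq_comm]

/-- Example 2.1.8: the Jones–Conway (HOMFLY) skein operations on a field,
`u | w = x⁻¹·(w − y·u)`, `u ∗ w = y⁻¹·(w − x·u)`, with basepoints
`aₙ = (x+y)^(n−1)`, satisfy all seven Conway algebra axioms C1–C7. -/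
theorem jonesConway_isConwayAlgebra {K : Type*} [Field K] (x y : K)
    (hx : x ≠ 0) (hy : y ≠ 0)
    (bar ast : K → K → K)
    (hbar : ∀ u w : K, bar u w = x⁻¹ * (w - y * u))
    (hast : ∀ u w : K, ast u w = y⁻¹ * (w - x * u))
    (a : ℕ → K) (ha : ∀ n : ℕ, 1 ≤ n → a n = (x + y) ^ (n - 1)) :
    (∀ n : ℕ, 1 ≤ n → bar (a n) (a (n + 1)) = a n) ∧
    (∀ n : ℕ, 1 ≤ n → ast (a n) (a (n + 1)) = a n) ∧
    (∀ p q r s : K, bar (bar p q) (bar r s) = bar (bar p r) (bar q s)) ∧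
    (∀ p q r s : K, ast (bar p q) (bar r s) = bar (ast p r) (ast q s)) ∧
    (∀ p q r s : K, ast (ast p q) (ast r s) = ast (ast p r) (ast q s)) ∧
    (∀ p q : K, ast (bar p q) q = p) ∧
    (∀ p q : K, bar (ast p q) q = p) := by
  have bar_iff (u v w : K) : bar u w = v ↔ x * v + y * u = w := by
    rw [hbar, inv_mul_sub_mul_eq_iff hx]
  have ast_iff (u v w : K) : ast u w = v ↔ x * u + y * v = w := by
    rw [hast, inv_mul_sub_mul_eq_iff hy, add_comm]
  have bar_linear (u w : K) : bar u w = -(x⁻¹ * y) * u + x⁻¹ * w := by rw [hbar]; ring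
  have ast_linear (u w : K) : ast u w = -(y⁻¹ * x) * u + y⁻¹ * w := by rw [hast]; ring
  have a_skein (n : ℕ) (hn : 1 ≤ n) : x * a n + y * a n = a (n + 1) := by
    obtain ⟨m, rfl⟩ := Nat.exists_eq_add_of_le' hn
    rw [ha _ hn, ha _ (by omega), Nat.add_sub_cancel, Nat.add_sub_cancel]
    ring
  exact ⟨fun n hn => (bar_iff _ _ _).mpr (a_skein n hn),
    fun n hn => (ast_iff _ _ _).mpr (a_skein n hn),
    linear_ops_interchange bar_linear bar_linear,
    linear_ops_interchange bar_linear ast_linear,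
    linear_ops_interchange ast_linear ast_linear,
    fun p q => (ast_iff _ _ _).mpr ((bar_iff p _ q).mp rfl),
    fun p q => (bar_iff _ _ _).mpr ((ast_iff p _ q).mp rfl)⟩
end

section
/- Let K be a field, x, y ∈ K with x ≠ 0 and y ≠ 0, and z ∈ K. Define binary operations on K by u | w = x⁻¹·(w − z − y·u) and u ∗ w = y⁻¹·(w − z − x·u), and set aₙ = (x + y)^(n−1) + z·∑_{k=0}^{n−2} (x + y)^k for n ≥ 1 (so a₁ = 1 and a₂ = x + y + z). Then (K; a₁, a₂, …, |, ∗) satisfies all seven Conway algebra axioms C1–C7. (Proposition 3.38(a).) -/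
/-! Both operations are affine, `u | w = -(y/x)·u + x⁻¹·w - z/x` and `u ∗ w = -(x/y)·u + y⁻¹·w - z/y`.
Affine operations with commuting coefficients satisfy the mixed medial laws C3–C5 as soon as their
constant terms are compatible. C6 and C7 say that `|` and `∗` both solve the skein relation
`x·v + y·u + z = w` for one of its unknowns, and C1, C2 reduce to the recurrence
`aₙ₊₁ = (x + y)·aₙ + z`. -/

open Finset

theorem pow_add_mul_geom_sum_succ {R : Type*} [CommRing R] (c z : R) (m : ℕ) :
    c ^ (m + 1) + z * ∑ k ∈ range (m + 1), c ^ k = c * (c ^ m + z * ∑ k ∈ range m, c ^ k) + z := by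
  rw [geom_sum_succ]
  ring

theorem medial_of_affine {R : Type*} [CommRing R] {f g : R → R → R} {α β γ α' β' γ' : R}
    (hf : ∀ u w, f u w = α * u + β * w + γ) (hg : ∀ u w, g u w = α' * u + β' * w + γ')
    (h : (α' + β' - 1) * γ = (α + β - 1) * γ') (p q r s : R) :
    g (f p q) (f r s) = f (g p r) (g q s) := by
  simp only [hf, hg]
  linear_combination h

theorem inv_mul_sub_sub_eq_iff {K : Type*} [Field K] {x y z u v w : K} (hx : x ≠ 0) :
    x⁻¹ * (w - z - y * u) = v ↔ x * v + y * u + z = w := by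
  rw [inv_mul_eq_iff_eq_mul₀ hx]
  constructor <;> intro h <;> linear_combination -h

/-- Proposition 3.38(a): the skein operations `u | w = x⁻¹·(w − z − y·u)`,
`u ∗ w = y⁻¹·(w − z − x·u)` with basepoints
`aₙ = (x+y)^(n−1) + z·∑_{k=0}^{n−2} (x+y)^k` satisfy all seven Conway algebra
axioms C1–C7. -/
theorem threeVariable_isConwayAlgebra {K : Type*} [Field K] (x y z : K)
    (hx : x ≠ 0) (hy : y ≠ 0)
    (bar ast : K → K → K)
    (hbar : ∀ u w : K, bar u w = x⁻¹ * (w - z - y * u))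
    (hast : ∀ u w : K, ast u w = y⁻¹ * (w - z - x * u))
    (a : ℕ → K)
    (ha : ∀ n : ℕ, 1 ≤ n →
      a n = (x + y) ^ (n - 1) + z * ∑ k ∈ Finset.range (n - 1), (x + y) ^ k) :
    (∀ n : ℕ, 1 ≤ n → bar (a n) (a (n + 1)) = a n) ∧
    (∀ n : ℕ, 1 ≤ n → ast (a n) (a (n + 1)) = a n) ∧
    (∀ p q r s : K, bar (bar p q) (bar r s) = bar (bar p r) (bar q s)) ∧
    (∀ p q r s : K, ast (bar p q) (bar r s) = bar (ast p r) (ast q s)) ∧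
    (∀ p q r s : K, ast (ast p q) (ast r s) = ast (ast p r) (ast q s)) ∧
    (∀ p q : K, ast (bar p q) q = p) ∧
    (∀ p q : K, bar (ast p q) q = p) := by
  have hrec (n : ℕ) (hn : 1 ≤ n) : a (n + 1) = (x + y) * a n + z := by
    obtain ⟨m, rfl⟩ := Nat.exists_eq_add_of_le' hn
    rw [ha _ (by omega), ha _ hn, Nat.add_sub_cancel, Nat.add_sub_cancel]
    exact pow_add_mul_geom_sum_succ (x + y) z m
  have hbar_affine (u w : K) : bar u w = -(y / x) * u + x⁻¹ * w + -(z / x) := by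
    rw [hbar]; ring
  have hast_affine (u w : K) : ast u w = -(x / y) * u + y⁻¹ * w + -(z / y) := by
    rw [hast]; ring
  have hbar_skein (p q : K) : x * bar p q + y * p + z = q :=
    (inv_mul_sub_sub_eq_iff hx).1 (hbar p q).symm
  have hast_skein (p q : K) : x * p + y * ast p q + z = q := by
    linear_combination (inv_mul_sub_sub_eq_iff hy).1 (hast p q).symm
  refine ⟨fun n hn => ?_, fun n hn => ?_, medial_of_affine hbar_affine hbar_affine rfl,
    medial_of_affine hbar_affine hast_affine (by field_simp; ring),
    medial_of_affine hast_affine hast_affine rfl, fun p q => ?_, fun p q => ?_⟩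
  · rw [hbar, inv_mul_sub_sub_eq_iff hx, hrec n hn]; ring
  · rw [hast, inv_mul_sub_sub_eq_iff hy, hrec n hn]; ring
  · rw [hast, inv_mul_sub_sub_eq_iff hy]; linear_combination hbar_skein p q
  · rw [hbar, inv_mul_sub_sub_eq_iff hx]; linear_combination hast_skein p q
end

section
/- Let K be a field, x, y ∈ K with x ≠ 0, y ≠ 0, x + y ≠ 1, and let z ∈ K. Define the map φ : K → K by φ(w) = w + z·(w − 1)/(x + y − 1). Then φ is a homomorphism from the Conway algebra structure on K with operations u | w = x⁻¹·(w − y·u), u ∗ w = y⁻¹·(w − x·u) and basepoints (x+y)^(n−1), to the Conway algebra structure on K with operations u |' w = x⁻¹·(w − z − y·u), u ∗' w = y⁻¹·(w − z − x·u) and basepoints (x+y)^(n−1) + z·∑_{k=0}^{n−2}(x+y)^k. That is: (1) φ((x+y)^(n−1)) = (x+y)^(n−1) + z·∑_{k=0}^{n−2}(x+y)^k for all n ≥ 1; (2) φ(u | w) = φ(u) |' φ(w) for all u, w ∈ K; (3) φ(u ∗ w) = φ(u) ∗' φ(w) for all u, w ∈ K. (The algebraic content of Proposition 3.38(b): the three-variable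 invariant is determined by the Jones–Conway polynomial via w_L(x,y,z) = w_L(x,y,0) + z·(w_L(x,y,0) − 1)/(x+y−1).) -/
/-!
The map `φ` is the affine map `w ↦ w + c (w - 1)` with `c (x + y - 1) = z`. An affine map with
linear part `1 + c` turns `x a + y b` into `x φ(a) + y φ(b) + c (x + y - 1)`, so it carries the
skein relation `x w₁ + y w₂ = w₀` to `x w₁ + y w₂ = w₀ - z`; both pairs of operations are obtained
by solving these relations for `w₁` resp. `w₂`. On basepoints, `c ((x + y)ᵐ - 1)` is `z` times the
geometric sum `∑_{k<m} (x + y)ᵏ`.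
-/

open Finset

section SkeinShift

variable {K : Type*} [Field K] {p s t : K}

def skeinShift (p z w : K) : K := w + z * (w - 1) / (p - 1)

theorem skeinShift_linear_combination (hp : p ≠ 1) (hst : s + t = p) (z a b : K) :
    s * skeinShift p z a + t * skeinShift p z b = skeinShift p z (s * a + t * b) - z := by
  subst hst
  unfold skeinShift
  field_simp [sub_ne_zero.mpr hp]
  ring

theorem skeinShift_inv_mul_sub (hp : p ≠ 1) (hst : s + t = p) (hs : s ≠ 0) (z u w : K) :
    skeinShift p z (s⁻¹ * (w - t * u)) = s⁻¹ * (skeinShift p z w - z - t * skeinShift p z u) := by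
  rw [eq_inv_mul_iff_mul_eq₀ hs]
  have h := skeinShift_linear_combination hp hst z (s⁻¹ * (w - t * u)) u
  rw [mul_inv_cancel_left₀ hs, sub_add_cancel] at h
  linear_combination h

theorem skeinShift_pow (hp : p ≠ 1) (z : K) (m : ℕ) :
    skeinShift p z (p ^ m) = p ^ m + z * ∑ k ∈ range m, p ^ k := by
  unfold skeinShift
  rw [← geom_sum_mul]
  field_simp [sub_ne_zero.mpr hp]

end SkeinShift

/-- Proposition 3.38(b), algebraic content: `φ(w) = w + z·(w − 1)/(x + y − 1)`
is a homomorphism from the Conway algebra of Example 2.1.8 to the Conway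
algebra of Proposition 3.38(a): it sends basepoints to basepoints and
intertwines both pairs of operations. -/
theorem threeVariable_homomorphism {K : Type*} [Field K] (x y z : K)
    (hx : x ≠ 0) (hy : y ≠ 0) (hxy : x + y ≠ 1)
    (φ : K → K) (hφ : ∀ w : K, φ w = w + z * (w - 1) / (x + y - 1))
    (bar ast bar' ast' : K → K → K)
    (hbar : ∀ u w : K, bar u w = x⁻¹ * (w - y * u))
    (hast : ∀ u w : K, ast u w = y⁻¹ * (w - x * u))
    (hbar' : ∀ u w : K, bar' u w = x⁻¹ * (w - z - y * u))
    (hast' : ∀ u w : K, ast' u w = y⁻¹ * (w - z - x * u)) :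
    (∀ n : ℕ, 1 ≤ n →
      φ ((x + y) ^ (n - 1)) =
        (x + y) ^ (n - 1) + z * ∑ k ∈ Finset.range (n - 1), (x + y) ^ k) ∧
    (∀ u w : K, φ (bar u w) = bar' (φ u) (φ w)) ∧
    (∀ u w : K, φ (ast u w) = ast' (φ u) (φ w)) := by
  obtain rfl : φ = skeinShift (x + y) z := funext hφ
  obtain rfl : bar = fun u w => x⁻¹ * (w - y * u) := funext₂ hbar
  obtain rfl : ast = fun u w => y⁻¹ * (w - x * u) := funext₂ hast
  obtain rfl : bar' = fun u w => x⁻¹ * (w - z - y * u) := funext₂ hbar'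
  obtain rfl : ast' = fun u w => y⁻¹ * (w - z - x * u) := funext₂ hast'
  exact ⟨fun n _ => skeinShift_pow hxy z (n - 1),
    fun u w => skeinShift_inv_mul_sub hxy rfl hx z u w,
    fun u w => skeinShift_inv_mul_sub hxy (add_comm y x) hy z u w⟩
end

section
/- Let A be a type with two binary operations | and ∗ satisfying all of axioms C3, C4, C5, C6, C7 (universally). Then for all elements w₁, w₂, h₁, h₂, u, p, q ∈ A, the following equivalence holds: (w₂ ∗ (p ∗ u)) | h₂ = (w₁ | (q | u)) ∗ h₁ if and only if (w₂ ∗ q) | h₂ = (w₁ | p) ∗ h₁. (Lemma 3.30(a), the key algebraic lemma used to prove that closed 3-braids with exponent sum zero cannot be distinguished from their mirror images by any Conway algebra invariant; here u plays the role of the common value A_{a−2,b+2} = A_{c−2,d+2}, p ∗ u the role of A_{a−2,b+1}, and q | u the role of A_{c−1,d+2}.) -/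
/-! Both sides are equations that can be solved for `w₂`, using C6 and C7 to cancel `| h₂` and
`∗ (p ∗ u)` (resp. `∗ q`). The two resulting expressions for `w₂` agree by the exchange law
`((w | r) ∗ h) | p = ((w | p) ∗ h) | r`, a consequence of C3, C4 and C6. -/

namespace ConwayAlgebra

variable {A : Type*} {bar ast : A → A → A}

theorem bar_eq_iff_eq_ast (hC6 : ∀ x y : A, ast (bar x y) y = x)
    (hC7 : ∀ x y : A, bar (ast x y) y = x) (x y z : A) :
    bar x y = z ↔ x = ast z y :=
  ⟨fun h => by rw [← h, hC6], fun h => by rw [h, hC7]⟩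

theorem ast_eq_iff_eq_bar (hC6 : ∀ x y : A, ast (bar x y) y = x)
    (hC7 : ∀ x y : A, bar (ast x y) y = x) (x y z : A) :
    ast x y = z ↔ x = bar z y :=
  ⟨fun h => by rw [← h, hC7], fun h => by rw [h, hC6]⟩

theorem bar_ast_bar_comm
    (hC3 : ∀ a b c d : A, bar (bar a b) (bar c d) = bar (bar a c) (bar b d))
    (hC4 : ∀ a b c d : A, ast (bar a b) (bar c d) = bar (ast a c) (ast b d))
    (hC6 : ∀ x y : A, ast (bar x y) y = x) (w r p h : A) :
    bar (ast (bar w r) h) p = bar (ast (bar w p) h) r := by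
  calc bar (ast (bar w r) h) p
      = bar (ast (bar w r) h) (ast (bar p h) h) := by rw [hC6]
    _ = ast (bar (bar w r) (bar p h)) (bar h h) := (hC4 _ _ _ _).symm
    _ = ast (bar (bar w p) (bar r h)) (bar h h) := by rw [hC3]
    _ = bar (ast (bar w p) h) (ast (bar r h) h) := hC4 _ _ _ _
    _ = bar (ast (bar w p) h) r := by rw [hC6]

end ConwayAlgebra

open ConwayAlgebra in
theorem conway_lemma_3_30a_general {A : Type*} (bar ast : A → A → A)
    (hC3 : ∀ a b c d : A, bar (bar a b) (bar c d) = bar (bar a c) (bar b d))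
    (hC4 : ∀ a b c d : A, ast (bar a b) (bar c d) = bar (ast a c) (ast b d))
    (hC6 : ∀ x y : A, ast (bar x y) y = x)
    (hC7 : ∀ x y : A, bar (ast x y) y = x)
    (w₁ w₂ h₁ h₂ u p q : A) :
    bar (ast w₂ (ast p u)) h₂ = ast (bar w₁ (bar q u)) h₁ ↔
      bar (ast w₂ q) h₂ = ast (bar w₁ p) h₁ := by
  have solved_for_w₂ : bar (ast (ast (bar w₁ (bar q u)) h₁) h₂) (ast p u)
      = bar (ast (ast (bar w₁ p) h₁) h₂) q :=
    calc bar (ast (ast (bar w₁ (bar q u)) h₁) h₂) (ast p u)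
        = ast (bar (ast (bar w₁ (bar q u)) h₁) p) (bar h₂ u) := (hC4 _ _ _ _).symm
      _ = ast (bar (ast (bar w₁ p) h₁) (bar q u)) (bar h₂ u) := by
          rw [bar_ast_bar_comm hC3 hC4 hC6]
      _ = bar (ast (ast (bar w₁ p) h₁) h₂) (ast (bar q u) u) := hC4 _ _ _ _
      _ = bar (ast (ast (bar w₁ p) h₁) h₂) q := by rw [hC6]
  simp only [bar_eq_iff_eq_ast hC6 hC7, ast_eq_iff_eq_bar hC6 hC7, solved_for_w₂]

/-- Lemma 3.30(a): in any algebra satisfying axioms C3–C7, for all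
`w₁, w₂, h₁, h₂, u, p, q` one has
`(w₂ ∗ (p ∗ u)) | h₂ = (w₁ | (q | u)) ∗ h₁ ↔ (w₂ ∗ q) | h₂ = (w₁ | p) ∗ h₁`. -/
theorem conway_lemma_3_30a {A : Type*} (bar ast : A → A → A)
    (hC3 : ∀ a b c d : A, bar (bar a b) (bar c d) = bar (bar a c) (bar b d))
    (hC4 : ∀ a b c d : A, ast (bar a b) (bar c d) = bar (ast a c) (ast b d))
    (hC5 : ∀ a b c d : A, ast (ast a b) (ast c d) = ast (ast a c) (ast b d))
    (hC6 : ∀ x y : A, ast (bar x y) y = x)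
    (hC7 : ∀ x y : A, bar (ast x y) y = x)
    (w₁ w₂ h₁ h₂ u p q : A) :
    bar (ast w₂ (ast p u)) h₂ = ast (bar w₁ (bar q u)) h₁ ↔
      bar (ast w₂ q) h₂ = ast (bar w₁ p) h₁ :=
  conway_lemma_3_30a_general bar ast hC3 hC4 hC6 hC7 w₁ w₂ h₁ h₂ u p q
end

section
/- Let N be an n × n complex Hermitian matrix with det N ≠ 0, let a ∈ ℂⁿ be a column vector, let m ∈ ℝ, and let M be the (n+1) × (n+1) Hermitian matrix given in block form by M = [[N, a], [a*, m]], where a* is the conjugate transpose of a. If det M ≠ 0, then |σ(M) − σ(N)| = 1, where σ denotes the signature (number of positive eigenvalues minus number of negative eigenvalues, counted with multiplicity). (Lemma 4.12(b): adding one row and column to an invertible Hermitian matrix changes the signature by exactly ±1 when the result remains invertible.) -/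
/-!
The positive (negative) index of inertia of a Hermitian matrix is the largest dimension of a
subspace on which its Hermitian form is positive (negative) definite. The form of `M` restricts to
that of `N` on the first `n` coordinates, so neither index decreases from `N` to `M`. For an
invertible Hermitian matrix the two indices add up to its size, so together they grow by exactly
one: one index grows by one while the other stays put, and the signature changes by `±1`.
-/

open Matrix

/-- The signature of a Hermitian complex matrix: the number of positive
eigenvalues minus the number of negative eigenvalues (with multiplicity). -/
noncomputable def hermitianSignature {ι : Type*} [Fintype ι] [DecidableEq ι]
    {M : Matrix ι ι ℂ} (hM : M.IsHermitian) : ℤ :=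
  ((Finset.univ.filter fun i => 0 < hM.eigenvalues i).card : ℤ) -
    ((Finset.univ.filter fun i => hM.eigenvalues i < 0).card : ℤ)

open Finset

namespace Matrix

variable {𝕜 ι κ : Type*} [RCLike 𝕜] [Fintype ι] [Fintype κ]

noncomputable def hermForm (A : Matrix ι ι 𝕜) (x : ι → 𝕜) : ℝ :=
  RCLike.re (star x ⬝ᵥ A *ᵥ x)

lemma hermForm_conjTranspose_mul_mul (A : Matrix ι ι 𝕜) (P : Matrix ι κ 𝕜) (x : κ → 𝕜) :
    hermForm (Pᴴ * A * P) x = hermForm A (P *ᵥ x) := by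
  rw [hermForm, hermForm, ← mulVec_mulVec, ← mulVec_mulVec, dotProduct_mulVec, star_mulVec]

lemma hermForm_diagonal [DecidableEq ι] (d : ι → ℝ) (y : ι → 𝕜) :
    hermForm (diagonal (RCLike.ofReal ∘ d)) y = ∑ i, d i * ‖y i‖ ^ 2 := by
  simp only [hermForm, mulVec_diagonal, dotProduct, Pi.star_apply, Function.comp_apply,
    map_sum]
  refine sum_congr rfl fun i _ => ?_
  rw [mul_left_comm, RCLike.star_def, RCLike.conj_mul, ← RCLike.ofReal_pow, ← RCLike.ofReal_mul,
    RCLike.ofReal_re]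

namespace IsHermitian

variable [DecidableEq ι] {A : Matrix ι ι 𝕜} (hA : A.IsHermitian)

lemma eigenvectorUnitary_mulVec_star_mulVec (x : ι → 𝕜) :
    (hA.eigenvectorUnitary : Matrix ι ι 𝕜) *ᵥ (star (hA.eigenvectorUnitary : Matrix ι ι 𝕜) *ᵥ x)
      = x := by
  rw [mulVec_mulVec, Unitary.mul_star_self_of_mem hA.eigenvectorUnitary.2, one_mulVec]

lemma hermForm_eq_sum_eigenvalues (x : ι → 𝕜) :
    hermForm A x = ∑ i, hA.eigenvalues i *
      ‖(star (hA.eigenvectorUnitary : Matrix ι ι 𝕜) *ᵥ x) i‖ ^ 2 := by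
  set U : Matrix ι ι 𝕜 := ↑hA.eigenvectorUnitary
  have hx : x = U *ᵥ (star U *ᵥ x) := (hA.eigenvectorUnitary_mulVec_star_mulVec x).symm
  have hdiag : Uᴴ * A * U = diagonal (RCLike.ofReal ∘ hA.eigenvalues) := by
    simpa only [Unitary.conjStarAlgAut_star_apply, Unitary.coe_star, star_eq_conjTranspose] using
      hA.conjStarAlgAut_star_eigenvectorUnitary
  conv_lhs => rw [hx]
  rw [← hermForm_conjTranspose_mul_mul, hdiag, hermForm_diagonal]

/-- With `ε = 1` and `ε = -1` these are the positive and the negative index of inertia; the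
weight `ε` lets one argument serve both. -/
noncomputable def inertiaIndex (ε : ℝ) : ℕ := #{i | 0 < ε * hA.eigenvalues i}

lemma finrank_le_inertiaIndex {ε : ℝ} {V : Submodule 𝕜 (ι → 𝕜)}
    (hV : ∀ x ∈ V, x ≠ 0 → 0 < ε * hermForm A x) :
    Module.finrank 𝕜 V ≤ hA.inertiaIndex ε := by
  set U : Matrix ι ι 𝕜 := ↑hA.eigenvectorUnitary with hU
  let f : V →ₗ[𝕜] ({i // 0 < ε * hA.eigenvalues i} → 𝕜) :=
    LinearMap.funLeft 𝕜 𝕜 Subtype.val ∘ₗ (star U).mulVecLin ∘ₗ V.subtype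
  have hf : Function.Injective f := by
    refine (injective_iff_map_eq_zero f).2 fun ⟨x, hx⟩ hfx => ?_
    by_contra hne
    have hle : ε * hermForm A x ≤ 0 := by
      rw [hA.hermForm_eq_sum_eigenvalues, ← hU, mul_sum]
      refine sum_nonpos fun i _ => ?_
      rw [← mul_assoc]
      by_cases hi : 0 < ε * hA.eigenvalues i
      · simp [show (star U *ᵥ x) i = 0 from congr_fun hfx ⟨i, hi⟩]
      · exact mul_nonpos_of_nonpos_of_nonneg (not_lt.1 hi) (by positivity)
    exact (hV x hx (by simpa using hne)).not_ge hle
  calc Module.finrank 𝕜 V ≤ Module.finrank 𝕜 ({i // 0 < ε * hA.eigenvalues i} → 𝕜) :=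
        LinearMap.finrank_le_finrank_of_injective hf
    _ = hA.inertiaIndex ε := by simp [inertiaIndex, Fintype.card_subtype]

lemma exists_finrank_eq_inertiaIndex (ε : ℝ) :
    ∃ V : Submodule 𝕜 (ι → 𝕜), Module.finrank 𝕜 V = hA.inertiaIndex ε ∧
      ∀ x ∈ V, x ≠ 0 → 0 < ε * hermForm A x := by
  set U : Matrix ι ι 𝕜 := ↑hA.eigenvectorUnitary with hU
  -- the span of the eigenvectors with `0 < ε * λ`, as a kernel so that rank-nullity bounds it
  let g : (ι → 𝕜) →ₗ[𝕜] ({i // ¬ 0 < ε * hA.eigenvalues i} → 𝕜) :=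
    LinearMap.funLeft 𝕜 𝕜 Subtype.val ∘ₗ (star U).mulVecLin
  have hpos : ∀ x ∈ LinearMap.ker g, x ≠ 0 → 0 < ε * hermForm A x := by
    intro x hx hne
    have hy : star U *ᵥ x ≠ 0 := fun h =>
      hne (by rw [← hA.eigenvectorUnitary_mulVec_star_mulVec x, ← hU, h, mulVec_zero])
    obtain ⟨j, hj⟩ := Function.ne_iff.1 hy
    have hjpos : 0 < ε * hA.eigenvalues j := by
      by_contra h
      exact hj (congr_fun hx ⟨j, h⟩)
    rw [hA.hermForm_eq_sum_eigenvalues, ← hU, mul_sum]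
    refine sum_pos' (fun i _ => ?_) ⟨j, mem_univ j, ?_⟩ <;> rw [← mul_assoc]
    · by_cases hi : 0 < ε * hA.eigenvalues i
      · positivity
      · simp [show (star U *ᵥ x) i = 0 from congr_fun hx ⟨i, hi⟩]
    · exact mul_pos hjpos (pow_pos (norm_pos_iff.2 hj) 2)
  refine ⟨LinearMap.ker g, le_antisymm (hA.finrank_le_inertiaIndex hpos) ?_, hpos⟩
  have hrank := LinearMap.finrank_range_add_finrank_ker g
  have hrange : Module.finrank 𝕜 (LinearMap.range g) ≤
      Fintype.card {i // ¬ 0 < ε * hA.eigenvalues i} :=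
    (Submodule.finrank_le _).trans (by simp)
  have hcard := card_filter_add_card_filter_not (s := univ) (fun i => 0 < ε * hA.eigenvalues i)
  simp only [Module.finrank_fintype_fun_eq_card, Fintype.card_subtype, card_univ]
    at hrank hrange hcard
  rw [inertiaIndex]
  omega

lemma inertiaIndex_conjTranspose_mul_mul_le [DecidableEq κ] {P : Matrix ι κ 𝕜}
    (hP : Function.Injective P.mulVec) (ε : ℝ) :
    (isHermitian_conjTranspose_mul_mul P hA).inertiaIndex ε ≤ hA.inertiaIndex ε := by
  obtain ⟨V, hVdim, hVpos⟩ :=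
    (isHermitian_conjTranspose_mul_mul P hA).exists_finrank_eq_inertiaIndex ε
  rw [← hVdim, (Submodule.equivMapOfInjective P.mulVecLin hP V).finrank_eq]
  refine hA.finrank_le_inertiaIndex ?_
  rintro _ ⟨x, hx, rfl⟩ hne
  rw [mulVecLin_apply, ← hermForm_conjTranspose_mul_mul]
  exact hVpos x hx fun h => hne (by rw [h, map_zero])

lemma inertiaIndex_submatrix_le [DecidableEq κ] {f : κ → ι} (hf : Function.Injective f)
    (ε : ℝ) : (hA.submatrix f).inertiaIndex ε ≤ hA.inertiaIndex ε := by
  set P : Matrix ι κ 𝕜 := (1 : Matrix ι ι 𝕜).submatrix (Equiv.refl ι) f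
  have hPstar : Pᴴ = (1 : Matrix ι ι 𝕜).submatrix f (Equiv.refl ι) := by
    rw [conjTranspose_submatrix, conjTranspose_one]
  have hPP : Pᴴ * P = 1 := by
    rw [hPstar, one_submatrix_mul f (Equiv.refl ι), submatrix_submatrix]
    exact submatrix_one f hf
  have hAP : Pᴴ * A * P = A.submatrix f f := by
    rw [hPstar, one_submatrix_mul f (Equiv.refl ι), mul_submatrix_one (Equiv.refl ι),
      submatrix_submatrix]
    rfl
  have hP : Function.Injective P.mulVec :=
    Function.LeftInverse.injective (g := (Pᴴ *ᵥ ·)) fun x => by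
      simp only [mulVec_mulVec, hPP, one_mulVec]
  convert hA.inertiaIndex_conjTranspose_mul_mul_le hP ε using 2
  exact hAP.symm

lemma inertiaIndex_one_add_inertiaIndex_neg_one (hdet : A.det ≠ 0) :
    hA.inertiaIndex 1 + hA.inertiaIndex (-1) = Fintype.card ι := by
  have hne : ∀ i, hA.eigenvalues i ≠ 0 := fun i h => hdet <| by
    rw [hA.det_eq_prod_eigenvalues]
    exact prod_eq_zero (mem_univ i) (by simp [h])
  have hneg : #{i | hA.eigenvalues i < 0} = #{i | ¬ 0 < hA.eigenvalues i} :=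
    congr_arg card (filter_congr fun i _ => (not_lt.trans (hne i).le_iff_lt).symm)
  simpa only [inertiaIndex, one_mul, neg_one_mul, neg_pos, hneg, card_univ] using
    card_filter_add_card_filter_not (s := univ) (fun i => 0 < hA.eigenvalues i)

end IsHermitian
end Matrix

lemma hermitianSignature_eq_inertiaIndex_sub {ι : Type*} [Fintype ι] [DecidableEq ι]
    {A : Matrix ι ι ℂ} (hA : A.IsHermitian) :
    hermitianSignature hA = hA.inertiaIndex 1 - hA.inertiaIndex (-1) := by
  simp only [hermitianSignature, IsHermitian.inertiaIndex, one_mul, neg_one_mul, neg_pos]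

/-- Lemma 4.12(b): if `N` is an invertible Hermitian matrix and
`M = [[N, a], [a*, m]]` is an invertible Hermitian bordered extension of `N`,
then the signatures of `M` and `N` differ by exactly one. -/
theorem hermitian_bordered_signature {n : ℕ} {N : Matrix (Fin n) (Fin n) ℂ}
    (hN : N.IsHermitian) (hdetN : N.det ≠ 0) (a : Fin n → ℂ) (m : ℝ)
    (M : Matrix (Fin n ⊕ Unit) (Fin n ⊕ Unit) ℂ)
    (hMdef : M = Matrix.fromBlocks N
      (fun i (_ : Unit) => a i)
      (fun (_ : Unit) j => starRingEnd ℂ (a j))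
      (fun (_ : Unit) (_ : Unit) => (m : ℂ)))
    (hM : M.IsHermitian) (hdetM : M.det ≠ 0) :
    |hermitianSignature hM - hermitianSignature hN| = 1 := by
  obtain rfl : N = M.submatrix Sum.inl Sum.inl := by
    rw [hMdef]
    rfl
  have hpos : hN.inertiaIndex 1 ≤ hM.inertiaIndex 1 :=
    hM.inertiaIndex_submatrix_le Sum.inl_injective 1
  have hneg : hN.inertiaIndex (-1) ≤ hM.inertiaIndex (-1) :=
    hM.inertiaIndex_submatrix_le Sum.inl_injective (-1)
  have hcardM := hM.inertiaIndex_one_add_inertiaIndex_neg_one hdetM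
  have hcardN := hN.inertiaIndex_one_add_inertiaIndex_neg_one hdetN
  rw [Fintype.card_sum, Fintype.card_unit] at hcardM
  rw [hermitianSignature_eq_inertiaIndex_sub, hermitianSignature_eq_inertiaIndex_sub,
    abs_eq zero_le_one]
  omega
end

section
/- Let K be a field, let α, t ∈ K with α ≠ 0 and t ≠ 0, and let z ∈ K. Set μ = (α + α⁻¹)/t, and for integers i ≥ 1 and j ∈ ℤ define a_{i,j} = μ^(i−1)·(1 − z/t)·α^j + (z/t)·(μ − 1)^(i−1)·α^j and a′_{i,j} = (μ − 1)^(i−1)·α^j. Define the ternary operation x ∗ (y, w) = −x + t·y + z·w. Then for all i ≥ 1 and all j ∈ ℤ: a_{i, j−1} ∗ (a_{i+1, j}, a′_{i, j}) = a_{i, j+1}; equivalently, a_{i,j+1} + a_{i,j−1} = t·a_{i+1,j} + z·a′_{i,j}. (Verification of axiom K3 of a Kauffman algebra for the Jones–Conway–Kauffman polynomial algebra of Example 5.25.) -/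
/-!
Every `a_{i,j}` and `a′_{i,j}` is a multiple of `α ^ j`, and
`α ^ (j - 1) + α ^ (j + 1) = (α + α⁻¹) α ^ j = t μ α ^ j`. So K3 reduces to a recursion in `i`
for the coefficient `c_k = μ ^ k (1 - s) + s (μ - 1) ^ k` of `a_{k+1,j}` (with `s = z / t`),
namely `c_{k+1} + s (μ - 1) ^ k = μ c_k`, which holds because both `μ ^ k` and `(μ - 1) ^ k`
are multiplied by their base when `k` increases.
-/

theorem zpow_sub_one_add_zpow_add_one {D : Type*} [DivisionRing D] {α : D} (hα : α ≠ 0)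
    (j : ℤ) : α ^ (j - 1) + α ^ (j + 1) = α ^ j * (α + α⁻¹) := by
  rw [zpow_sub_one₀ hα, zpow_add_one₀ hα]
  noncomm_ring

/-- The coefficient of `α ^ j` in `a_{k+1,j}` of the Jones–Conway–Kauffman algebra,
with `s = z / t`. -/
def jckCoeff {R : Type*} [CommRing R] (μ s : R) (k : ℕ) : R :=
  μ ^ k * (1 - s) + s * (μ - 1) ^ k

theorem jckCoeff_succ_add {R : Type*} [CommRing R] (μ s : R) (k : ℕ) :
    jckCoeff μ s (k + 1) + s * (μ - 1) ^ k = μ * jckCoeff μ s k := by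
  unfold jckCoeff
  ring

/-- Axiom K3 for the Jones–Conway–Kauffman algebra of Example 5.25: with
`μ = (α + α⁻¹)/t`, `a_{i,j} = μ^(i−1)·(1 − z/t)·α^j + (z/t)·(μ−1)^(i−1)·α^j`,
`a′_{i,j} = (μ−1)^(i−1)·α^j` and `x ∗ (y,w) = −x + t·y + z·w`, one has
`a_{i,j−1} ∗ (a_{i+1,j}, a′_{i,j}) = a_{i,j+1}` for all `i ≥ 1`, `j ∈ ℤ`. -/
theorem JCK_axiom_K3 {K : Type*} [Field K] (α t z : K)
    (hα : α ≠ 0) (ht : t ≠ 0)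
    (μ : K) (hμ : μ = (α + α⁻¹) / t)
    (a : ℕ → ℤ → K) (a' : ℕ → ℤ → K)
    (ha : ∀ (i : ℕ), 1 ≤ i → ∀ j : ℤ,
      a i j = μ ^ (i - 1) * (1 - z / t) * α ^ j + (z / t) * (μ - 1) ^ (i - 1) * α ^ j)
    (ha' : ∀ (i : ℕ), 1 ≤ i → ∀ j : ℤ, a' i j = (μ - 1) ^ (i - 1) * α ^ j)
    (op : K → K → K → K) (hop : ∀ x y w : K, op x y w = -x + t * y + z * w) :
    ∀ (i : ℕ), 1 ≤ i → ∀ j : ℤ,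
      op (a i (j - 1)) (a (i + 1) j) (a' i j) = a i (j + 1) := by
  intro i hi j
  obtain ⟨k, rfl⟩ := Nat.exists_eq_add_of_le' hi
  have ha_succ (n : ℕ) (j : ℤ) : a (n + 1) j = jckCoeff μ (z / t) n * α ^ j := by
    rw [ha (n + 1) n.succ_pos', Nat.add_sub_cancel, jckCoeff]
    ring
  have htμ : t * μ = α + α⁻¹ := by rw [hμ, mul_div_cancel₀ _ ht]
  have hz : t * (z / t) = z := mul_div_cancel₀ z ht
  rw [hop, ha_succ, ha_succ, ha_succ, ha' _ hi, Nat.add_sub_cancel]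
  linear_combination t * α ^ j * jckCoeff_succ_add μ (z / t) k
    - jckCoeff μ (z / t) k * zpow_sub_one_add_zpow_add_one hα j
    + jckCoeff μ (z / t) k * α ^ j * htμ - (μ - 1) ^ k * α ^ j * hz
end

section
/- Let K be a field and let n be an index. Suppose given nonzero elements x_{n−1}, x_n, x′_n, x′_{n+1}, y_{n−1}, y_n, y′_n, y′_{n+1} of K and elements z_{n−1}, z_n, z′_n, z′_{n+1} of K satisfying: (i) x_{n−1}·x′_n = x_n·x′_{n+1}; (ii) y′_{n+1}/x′_{n+1} = y′_n/x′_n; (iii) y_n/x_n = y_{n−1}/x_{n−1}; (iv) z′_{n+1}/(x_n·x′_{n+1}) + z_n/x_n − y_n·z′_n/(x_n·x′_n) = z_{n−1}/(x′_n·x_{n−1}) + z′_n/x′_n − y′_n·z_n/(x_n·x′_n). Define, for each index m, the operations F |_m G = x_m⁻¹·(G − y_m·F − z_m) and F |_{m′} G = x′_m⁻¹·(G − y′_m·F − z′_m) on K. Then for all F_a, F_b, F_c, F_d ∈ K: (F_a |_{n′} F_b) |_n (F_c |_{(n+1)′} F_d) = (F_a |_n F_c) |_{n′} (F_b |_{n−1}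 F_d). (The key transposition-property computation in the verification that the partial algebra of Example 4.5, which yields the link polynomial in infinitely many variables, satisfies axiom C3 in the case |a| = |c| − 1 = |b| + 1 = n, |d| = n.) -/
/-! Each skein operation is affine in its two arguments, so both sides of the identity are affine
functions of `Fa, Fb, Fc, Fd`. Comparing coefficients: those of `Fa` agree by commutativity, and
those of `Fd`, `Fc`, `Fb` and the constant terms agree by conditions (i), (ii), (iii) and (iv)
respectively. -/

section

variable {K : Type*} [Field K]

/-- `F | G`: the solution `w₁` of the skein equation `x w₁ + y F = G − z`. -/
def skeinOp (x y z F G : K) : K := x⁻¹ * (G - y * F - z)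

theorem skeinOp_skeinOp (x y z x₁ y₁ z₁ x₂ y₂ z₂ a b c d : K) :
    skeinOp x y z (skeinOp x₁ y₁ z₁ a b) (skeinOp x₂ y₂ z₂ c d) =
      d / (x * x₂) - y₂ / x₂ / x * c - y / x / x₁ * b + y / x * (y₁ / x₁) * a
        - (z₂ / (x * x₂) + z / x - y * z₁ / (x * x₁)) := by
  unfold skeinOp
  ring

theorem skeinOp_transpose {x y z x' y' z' xm ym zm x'p y'p z'p : K}
    (hi : xm * x' = x * x'p) (hii : y'p / x'p = y' / x') (hiii : y / x = ym / xm)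
    (hiv : z'p / (x * x'p) + z / x - y * z' / (x * x') =
      zm / (x' * xm) + z' / x' - y' * z / (x * x'))
    (a b c d : K) :
    skeinOp x y z (skeinOp x' y' z' a b) (skeinOp x'p y'p z'p c d) =
      skeinOp x' y' z' (skeinOp x y z a c) (skeinOp xm ym zm b d) := by
  rw [mul_comm x' xm, hi] at hiv
  rw [skeinOp_skeinOp, skeinOp_skeinOp, ← hiii, hii, mul_comm x' xm, hi]
  linear_combination -hiv

end

theorem infiniteVariable_C3_case_general {K : Type*} [Field K]
    (xnm1 xn x'n x'np1 ynm1 yn y'n y'np1 : K)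
    (znm1 zn z'n z'np1 : K)
    (hi : xnm1 * x'n = xn * x'np1)
    (hii : y'np1 / x'np1 = y'n / x'n)
    (hiii : yn / xn = ynm1 / xnm1)
    (hiv : z'np1 / (xn * x'np1) + zn / xn - yn * z'n / (xn * x'n) =
      znm1 / (x'n * xnm1) + z'n / x'n - y'n * zn / (xn * x'n))
    (barn barnm1 bar'n bar'np1 : K → K → K)
    (hbarn : ∀ F G : K, barn F G = xn⁻¹ * (G - yn * F - zn))
    (hbarnm1 : ∀ F G : K, barnm1 F G = xnm1⁻¹ * (G - ynm1 * F - znm1))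
    (hbar'n : ∀ F G : K, bar'n F G = x'n⁻¹ * (G - y'n * F - z'n))
    (hbar'np1 : ∀ F G : K, bar'np1 F G = x'np1⁻¹ * (G - y'np1 * F - z'np1)) :
    ∀ Fa Fb Fc Fd : K,
      barn (bar'n Fa Fb) (bar'np1 Fc Fd) = bar'n (barn Fa Fc) (barnm1 Fb Fd) := by
  obtain rfl : barn = skeinOp xn yn zn := funext₂ hbarn
  obtain rfl : barnm1 = skeinOp xnm1 ynm1 znm1 := funext₂ hbarnm1
  obtain rfl : bar'n = skeinOp x'n y'n z'n := funext₂ hbar'n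
  obtain rfl : bar'np1 = skeinOp x'np1 y'np1 z'np1 := funext₂ hbar'np1
  exact skeinOp_transpose hi hii hiii hiv

/-- The transposition computation of Example 4.5 (case `|a| = |c|−1 = |b|+1 = n`,
`|d| = n`): under conditions (i)–(iv) on the coefficients, the indexed skein
operations `F |ₘ G = xₘ⁻¹·(G − yₘ·F − zₘ)` and `F |ₘ′ G = x′ₘ⁻¹·(G − y′ₘ·F − z′ₘ)`
satisfy `(F_a |ₙ′ F_b) |ₙ (F_c |₍ₙ₊₁₎′ F_d) = (F_a |ₙ F_c) |ₙ′ (F_b |ₙ₋₁ F_d)`. -/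
theorem infiniteVariable_C3_case {K : Type*} [Field K]
    (xnm1 xn x'n x'np1 ynm1 yn y'n y'np1 : K)
    (hxnm1 : xnm1 ≠ 0) (hxn : xn ≠ 0) (hx'n : x'n ≠ 0) (hx'np1 : x'np1 ≠ 0)
    (hynm1 : ynm1 ≠ 0) (hyn : yn ≠ 0) (hy'n : y'n ≠ 0) (hy'np1 : y'np1 ≠ 0)
    (znm1 zn z'n z'np1 : K)
    (hi : xnm1 * x'n = xn * x'np1)
    (hii : y'np1 / x'np1 = y'n / x'n)
    (hiii : yn / xn = ynm1 / xnm1)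
    (hiv : z'np1 / (xn * x'np1) + zn / xn - yn * z'n / (xn * x'n) =
      znm1 / (x'n * xnm1) + z'n / x'n - y'n * zn / (xn * x'n))
    (barn barnm1 bar'n bar'np1 : K → K → K)
    (hbarn : ∀ F G : K, barn F G = xn⁻¹ * (G - yn * F - zn))
    (hbarnm1 : ∀ F G : K, barnm1 F G = xnm1⁻¹ * (G - ynm1 * F - znm1))
    (hbar'n : ∀ F G : K, bar'n F G = x'n⁻¹ * (G - y'n * F - z'n))
    (hbar'np1 : ∀ F G : K, bar'np1 F G = x'np1⁻¹ * (G - y'np1 * F - z'np1)) :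
    ∀ Fa Fb Fc Fd : K,
      barn (bar'n Fa Fb) (bar'np1 Fc Fd) = bar'n (barn Fa Fc) (barnm1 Fb Fd) :=
  infiniteVariable_C3_case_general xnm1 xn x'n x'np1 ynm1 yn y'n y'np1 znm1 zn z'n z'np1 hi hii hiii
    hiv barn barnm1 bar'n bar'np1 hbarn hbarnm1 hbar'n hbar'np1
end
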